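/- arXiv:math/0609159 — 7 statements merged into one kernel-verified Lean document; each statement's English description precedes it below -/
import Mathlib

section
/- Let Ω be a nonempty compact Hausdorff space, let f : Ω → ℝ be a continuous function with f ≥ 0, and let h : Ω → ℝ be an upper semicontinuous function with h ≥ 0. Then f(ω) ≤ h(ω) for every ω ∈ Ω if and only if for every continuous function g : Ω → ℝ with g ≥ 0 one has sup_{ω ∈ Ω} g(ω)·f(ω) ≤ sup_{ω ∈ Ω} g(ω)·h(ω). -/
open Set

/-- An upper semicontinuous real function on a compact space is bounded above. -/
lemma usc_bddAbove {Ω : Type*} [TopologicalSpace Ω] [CompactSpace Ω]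
    {h : Ω → ℝ} (hh : UpperSemicontinuous h) : BddAbove (Set.range h) := by
  have hcov : (Set.univ : Set Ω) ⊆ ⋃ n : ℕ, {ω | h ω < n} := by
    intro ω _
    obtain ⟨n, hn⟩ := exists_nat_gt (h ω)
    exact Set.mem_iUnion.2 ⟨n, hn⟩
  obtain ⟨s, hs⟩ := isCompact_univ.elim_finite_subcover _
    (fun n : ℕ => hh.isOpen_preimage n) hcov
  by_cases hsne : s.Nonempty
  · refine ⟨(s.max' hsne : ℕ), ?_⟩
    rintro x ⟨ω, rfl⟩
    obtain ⟨n, hn, hωn⟩ := Set.mem_iUnion₂.1 (hs (Set.mem_univ ω))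
    exact hωn.le.trans (Nat.cast_le.2 (s.le_max' n hn))
  · refine ⟨0, ?_⟩
    rintro x ⟨ω, rfl⟩
    exfalso
    obtain ⟨n, hn, _⟩ := Set.mem_iUnion₂.1 (hs (Set.mem_univ ω))
    exact hsne ⟨n, hn⟩

/-- Lemma 3.1 (cont=leq): on a nonempty compact Hausdorff space, a continuous nonnegative
function `f` is dominated pointwise by a nonnegative upper semicontinuous function `h`
iff `sup g·f ≤ sup g·h` for every continuous nonnegative `g`. -/
theorem stmt_0 {Ω : Type*} [TopologicalSpace Ω] [CompactSpace Ω] [T2Space Ω] [Nonempty Ω]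
    (f h : Ω → ℝ) (hf : Continuous f) (hf0 : ∀ ω, 0 ≤ f ω)
    (hh : UpperSemicontinuous h) (hh0 : ∀ ω, 0 ≤ h ω) :
    (∀ ω, f ω ≤ h ω) ↔
      ∀ g : Ω → ℝ, Continuous g → (∀ ω, 0 ≤ g ω) →
        (⨆ ω, g ω * f ω) ≤ ⨆ ω, g ω * h ω := by
  constructor
  · intro hle g hg hg0
    obtain ⟨M, hM⟩ := usc_bddAbove hh
    obtain ⟨C, hC⟩ := (isCompact_univ.image hg).bddAbove
    have hbdd : BddAbove (Set.range fun ω => g ω * h ω) := by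
      refine ⟨C * M, ?_⟩
      rintro x ⟨ω, rfl⟩
      have hgC : g ω ≤ C := hC ⟨ω, Set.mem_univ ω, rfl⟩
      have hhM : h ω ≤ M := hM ⟨ω, rfl⟩
      exact mul_le_mul hgC hhM (hh0 ω) ((hg0 ω).trans hgC)
    exact ciSup_mono hbdd fun ω => mul_le_mul_of_nonneg_left (hle ω) (hg0 ω)
  · intro hsup
    by_contra hcon
    push_neg at hcon
    obtain ⟨ω₀, hω₀⟩ := hcon
    obtain ⟨c, hc1, hc2⟩ := exists_between hω₀
    set U : Set Ω := {ω | h ω < c} ∩ {ω | c < f ω} with hU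
    have hUopen : IsOpen U := (hh.isOpen_preimage c).inter (isOpen_lt continuous_const hf)
    have hω₀U : ω₀ ∈ U := ⟨hc1, hc2⟩
    obtain ⟨g, hg0U, hg1, hgIcc⟩ := exists_continuous_zero_one_of_isClosed
      hUopen.isClosed_compl isClosed_singleton
      (Set.disjoint_singleton_right.2 (by simpa using hω₀U))
    have hc0 : 0 < c := lt_of_le_of_lt (hh0 ω₀) hc1
    have key := hsup g g.continuous (fun ω => (hgIcc ω).1)
    -- sup g·h ≤ c
    have hsuph : (⨆ ω, g ω * h ω) ≤ c := by
      refine ciSup_le fun ω => ?_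
      by_cases hωU : ω ∈ U
      · calc g ω * h ω ≤ 1 * c :=
              mul_le_mul (hgIcc ω).2 hωU.1.le (hh0 ω) zero_le_one
          _ = c := one_mul c
      · have : g ω = 0 := hg0U hωU
        simp [this, hc0.le]
    -- sup g·f ≥ f ω₀ > c
    have hbddf : BddAbove (Set.range fun ω => g ω * f ω) := by
      obtain ⟨C, hC⟩ := (isCompact_univ.image (g.continuous.mul hf)).bddAbove
      exact ⟨C, by rintro x ⟨ω, rfl⟩; exact hC ⟨ω, Set.mem_univ ω, rfl⟩⟩
    have hsupf : c < ⨆ ω, g ω * f ω := by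
      have hg1' : g ω₀ = 1 := hg1 rfl
      have : c < g ω₀ * f ω₀ := by rw [hg1', one_mul]; exact hc2
      exact this.trans_le (le_ciSup hbddf ω₀)
    exact absurd (key.trans hsuph) hsupf.not_ge
end

section
/- Let Ω be a topological space and let h : Ω → ℝ be a bounded upper semicontinuous function with h ≥ 0. Then the infimum of sup_{ω ∈ Δ} h(ω) taken over all open dense subsets Δ ⊆ Ω equals the infimum of sup_{ω ∈ Ξ} h(ω) taken over all dense subsets Ξ ⊆ Ω. -/
/-!
If `Ξ` is dense and `c > sup_Ξ h`, upper semicontinuity makes the sublevel set `{h < c}` open;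
it contains `Ξ`, so it is dense, and `h ≤ c` on it. Hence every lower bound of the values over
open dense sets lies below every value over dense sets, and the two infima agree.
-/

open Set

theorem Real.sInf_eq_sInf_of_subset_of_lowerBounds_subset {s t : Set ℝ} (hs : s.Nonempty)
    (hst : s ⊆ t) (hlb : lowerBounds s ⊆ lowerBounds t) : sInf s = sInf t := by
  by_cases hbdd : BddBelow s
  · have hmem : sInf s ∈ lowerBounds t := hlb (isGLB_csInf hs hbdd).1
    exact le_antisymm (le_csInf (hs.mono hst) hmem) (csInf_le_csInf ⟨_, hmem⟩ hs hst)
  · rw [Real.sInf_of_not_bddBelow hbdd,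
      Real.sInf_of_not_bddBelow fun ht => hbdd (ht.mono hst)]

theorem UpperSemicontinuous.exists_isOpen_dense_sSup_image_le {Ω : Type*} [TopologicalSpace Ω]
    {h : Ω → ℝ} (husc : UpperSemicontinuous h) {Ξ : Set Ω} (hΞ : Dense Ξ) (hne : Ξ.Nonempty)
    (hbdd : BddAbove (h '' Ξ)) {c : ℝ} (hc : sSup (h '' Ξ) < c) :
    ∃ Δ, IsOpen Δ ∧ Dense Δ ∧ sSup (h '' Δ) ≤ c := by
  have hsub : Ξ ⊆ h ⁻¹' Iio c := fun x hx =>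
    (le_csSup hbdd (mem_image_of_mem h hx)).trans_lt hc
  refine ⟨h ⁻¹' Iio c, husc.isOpen_preimage c, hΞ.mono hsub, ?_⟩
  exact csSup_le ((hne.mono hsub).image h) (by rintro _ ⟨ω, hω, rfl⟩; exact le_of_lt hω)

theorem stmt_1_general {Ω : Type*} [TopologicalSpace Ω] (h : Ω → ℝ)
    (hbd : ∃ C, ∀ ω, h ω ≤ C) (husc : UpperSemicontinuous h) :
    sInf ((fun Δ : Set Ω => sSup (h '' Δ)) '' {Δ : Set Ω | IsOpen Δ ∧ Dense Δ}) =
      sInf ((fun Ξ : Set Ω => sSup (h '' Ξ)) '' {Ξ : Set Ω | Dense Ξ}) := by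
  obtain ⟨C, hC⟩ := hbd
  refine Real.sInf_eq_sInf_of_subset_of_lowerBounds_subset
    ⟨_, mem_image_of_mem _ ⟨isOpen_univ, dense_univ⟩⟩ (image_mono fun Δ hΔ => hΔ.2) ?_
  rintro m hm _ ⟨Ξ, hΞ, rfl⟩
  rcases Ξ.eq_empty_or_nonempty with rfl | hne
  · exact hm ⟨∅, ⟨isOpen_empty, hΞ⟩, rfl⟩
  refine le_of_forall_gt_imp_ge_of_dense fun c hc => ?_
  obtain ⟨Δ, hΔo, hΔd, hΔc⟩ := husc.exists_isOpen_dense_sSup_image_le hΞ hne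
    ⟨C, by rintro _ ⟨ω, -, rfl⟩; exact hC ω⟩ hc
  exact (hm ⟨Δ, ⟨hΔo, hΔd⟩, rfl⟩).trans hΔc

/-- Remark after Lemma 3.1: for a bounded nonnegative upper semicontinuous function `h`,
the infimum of `sup_{ω ∈ Δ} h ω` over all open dense subsets `Δ` equals the infimum of
`sup_{ω ∈ Ξ} h ω` over all dense subsets `Ξ`. -/
theorem stmt_1 {Ω : Type*} [TopologicalSpace Ω] (h : Ω → ℝ)
    (hbd : ∃ C, ∀ ω, h ω ≤ C) (husc : UpperSemicontinuous h) (hpos : ∀ ω, 0 ≤ h ω) :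
    sInf ((fun Δ : Set Ω => sSup (h '' Δ)) '' {Δ : Set Ω | IsOpen Δ ∧ Dense Δ}) =
      sInf ((fun Ξ : Set Ω => sSup (h '' Ξ)) '' {Ξ : Set Ω | Dense Ξ}) :=
  stmt_1_general h hbd husc
end

section
/- Let Ω be a topological space, let h : Ω → ℝ be a bounded upper semicontinuous function with h ≥ 0, and let ε be a real number with 0 < ε ≤ ‖h‖ₑ. Then the set G := { ω ∈ Ω : h(ω) ≥ ‖h‖ₑ − ε } is closed and has nonempty interior. -/
/-- The essential norm of a nonnegative function `h` on a topological space: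
the infimum of the bounds of `h` over open dense subsets, i.e.
`inf { sup_{ω ∈ Δ} h ω : Δ open dense }`. -/
noncomputable def essNorm {Ω : Type*} [TopologicalSpace Ω] (h : Ω → ℝ) : ℝ :=
  sInf {c : ℝ | ∃ Δ : Set Ω, IsOpen Δ ∧ Dense Δ ∧ ∀ ω ∈ Δ, h ω ≤ c}

/-- Key step in Proposition 3.3 ((i)⇒(ii)): for `0 < ε ≤ ‖h‖ₑ`, the set
`G = {ω : h ω ≥ ‖h‖ₑ - ε}` is closed with nonempty interior. -/
theorem stmt_2 {Ω : Type*} [TopologicalSpace Ω] (h : Ω → ℝ)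
    (hbd : ∃ C, ∀ ω, h ω ≤ C) (husc : UpperSemicontinuous h) (hpos : ∀ ω, 0 ≤ h ω)
    (ε : ℝ) (hε : 0 < ε) (hεle : ε ≤ essNorm h) :
    IsClosed {ω : Ω | essNorm h - ε ≤ h ω} ∧
      (interior {ω : Ω | essNorm h - ε ≤ h ω}).Nonempty := by
  set c := essNorm h - ε with hc
  have hclosed : IsClosed {ω : Ω | c ≤ h ω} := by
    have : {ω : Ω | c ≤ h ω} = {ω : Ω | h ω < c}ᶜ := by
      ext ω; simp [not_lt]
    rw [this]
    exact (husc.isOpen_preimage c).isClosed_compl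
  refine ⟨hclosed, ?_⟩
  -- Ω is nonempty, otherwise essNorm h = 0 and ε ≤ 0 contradicts ε > 0
  by_cases hne : Nonempty Ω
  · by_contra hempty
    rw [Set.not_nonempty_iff_eq_empty] at hempty
    -- then the complement Δ := {ω | h ω < c} is open dense
    have hΔopen : IsOpen {ω : Ω | h ω < c} := husc.isOpen_preimage c
    have hΔdense : Dense {ω : Ω | h ω < c} := by
      rw [dense_iff_closure_eq]
      have := interior_compl (s := {ω : Ω | h ω < c})
      have hcompl : {ω : Ω | h ω < c}ᶜ = {ω : Ω | c ≤ h ω} := by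
        ext ω; simp [not_lt]
      rw [← compl_compl {ω : Ω | h ω < c}, closure_compl, hcompl, hempty]
      simp
    have hmem : c ∈ {d : ℝ | ∃ Δ : Set Ω, IsOpen Δ ∧ Dense Δ ∧ ∀ ω ∈ Δ, h ω ≤ d} :=
      ⟨{ω : Ω | h ω < c}, hΔopen, hΔdense, fun ω hω => le_of_lt hω⟩
    have hbdd : BddBelow {d : ℝ | ∃ Δ : Set Ω, IsOpen Δ ∧ Dense Δ ∧ ∀ ω ∈ Δ, h ω ≤ d} := by
      refine ⟨0, fun d hd => ?_⟩
      obtain ⟨Δ, _, hdense, hle⟩ := hd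
      obtain ⟨ω, hω⟩ := hdense.nonempty
      exact le_trans (hpos ω) (hle ω hω)
    have : essNorm h ≤ c := csInf_le hbdd hmem
    linarith
  · -- Ω empty: essNorm h = sInf univ = 0, contradicting 0 < ε ≤ essNorm h
    exfalso
    have : essNorm h = 0 := by
      unfold essNorm
      have : {d : ℝ | ∃ Δ : Set Ω, IsOpen Δ ∧ Dense Δ ∧ ∀ ω ∈ Δ, h ω ≤ d} = Set.univ := by
        ext d
        simp only [Set.mem_setOf_eq, Set.mem_univ, iff_true]
        refine ⟨∅, isOpen_empty, ?_, fun ω hω => absurd hω (Set.notMem_empty ω)⟩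
        rw [dense_iff_closure_eq]
        ext ω; exact absurd ⟨ω⟩ hne
      rw [this]
      exact Real.sInf_of_not_bddBelow (fun hb => not_bddBelow_univ (α := ℝ) hb)
    linarith
end

section
/- Let Ω be a compact Hausdorff space, let h : Ω → ℝ be a bounded upper semicontinuous function with h ≥ 0, and let ε be a real number with 0 < ε < ‖h‖ₑ. Then there exists a continuous function f : Ω → ℝ such that 0 ≤ f(ω) ≤ h(ω) for all ω ∈ Ω and sup_{ω ∈ Ω} f(ω) = ‖h‖ₑ − ε. -/
/-- From the proof of Proposition 3.3 ((i)⇒(ii)): for a bounded nonnegative upper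
semicontinuous `h` on a compact Hausdorff space and `0 < ε < ‖h‖ₑ`, there is a continuous
`f` with `0 ≤ f ≤ h` pointwise and `sup f = ‖h‖ₑ - ε`. -/
theorem stmt_3 {Ω : Type*} [TopologicalSpace Ω] [CompactSpace Ω] [T2Space Ω]
    (h : Ω → ℝ) (hbd : ∃ C, ∀ ω, h ω ≤ C) (husc : UpperSemicontinuous h)
    (hpos : ∀ ω, 0 ≤ h ω) (ε : ℝ) (hε : 0 < ε) (hεlt : ε < essNorm h) :
    ∃ f : Ω → ℝ, Continuous f ∧ (∀ ω, 0 ≤ f ω ∧ f ω ≤ h ω) ∧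
      (⨆ ω, f ω) = essNorm h - ε := by
  classical
  set M := essNorm h with hM
  -- Ω is nonempty (else essNorm = 0, contradicting 0 < ε < essNorm)
  rcases isEmpty_or_nonempty Ω with hΩ | hΩ
  · exfalso
    have : M = 0 := by
      have : {c : ℝ | ∃ Δ : Set Ω, IsOpen Δ ∧ Dense Δ ∧ ∀ ω ∈ Δ, h ω ≤ c} = Set.univ := by
        ext c
        simp only [Set.mem_setOf_eq, Set.mem_univ, iff_true]
        exact ⟨∅, isOpen_empty, by simp [dense_iff_closure_eq, Set.eq_empty_of_isEmpty], by simp⟩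
      rw [hM, essNorm, this]
      refine Real.sInf_of_not_bddBelow ?_
      rintro ⟨b, hb⟩
      exact absurd (hb (Set.mem_univ (b - 1))) (by linarith)
    linarith
  -- lower bound 0 for the defining set
  have hbdd : BddBelow {c : ℝ | ∃ Δ : Set Ω, IsOpen Δ ∧ Dense Δ ∧ ∀ ω ∈ Δ, h ω ≤ c} := by
    refine ⟨0, fun c hc => ?_⟩
    rcases hc with ⟨Δ, _, hΔd, hΔb⟩
    obtain ⟨ω, hω⟩ := hΔd.nonempty
    exact le_trans (hpos ω) (hΔb ω hω)
  -- V = {ω | h ω < M - ε} is open and not dense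
  set V : Set Ω := h ⁻¹' Set.Iio (M - ε) with hV
  have hVopen : IsOpen V := husc.isOpen_preimage (M - ε)
  have hVnd : ¬ Dense V := by
    intro hd
    have : M ≤ M - ε := csInf_le hbdd ⟨V, hVopen, hd, fun ω hω => le_of_lt hω⟩
    linarith
  -- an nonempty open set U on which h ≥ M - ε
  have hUne : ((closure V)ᶜ).Nonempty := by
    rw [Set.nonempty_compl]
    intro hcl
    exact hVnd (by rw [dense_iff_closure_eq, hcl])
  obtain ⟨ω₀, hω₀⟩ := hUne
  have hUopen : IsOpen (closure V)ᶜ := isClosed_closure.isOpen_compl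
  have hUge : ∀ ω ∈ (closure V)ᶜ, M - ε ≤ h ω := by
    intro ω hω
    by_contra hlt
    exact hω (subset_closure (by simpa [hV] using lt_of_not_ge hlt))
  -- Urysohn function
  obtain ⟨g, hg0, hg1, hg01⟩ := exists_continuous_zero_one_of_isClosed
    (isClosed_closure (s := V)) (isClosed_singleton (x := ω₀))
    (Set.disjoint_singleton_right.mpr hω₀)
  refine ⟨fun ω => (M - ε) * g ω, by continuity, ?_, ?_⟩
  · intro ω
    have hMε : 0 ≤ M - ε := by linarith
    constructor
    · exact mul_nonneg hMε (hg01 ω).1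
    · by_cases hωU : ω ∈ (closure V)ᶜ
      · calc (M - ε) * g ω ≤ (M - ε) * 1 :=
              mul_le_mul_of_nonneg_left (hg01 ω).2 hMε
          _ = M - ε := mul_one _
          _ ≤ h ω := hUge ω hωU
      · have hg : g ω = 0 := hg0 (by simpa using hωU)
        show (M - ε) * g ω ≤ h ω
        rw [hg, mul_zero]
        exact hpos ω
  · have hle : ∀ ω, (M - ε) * g ω ≤ M - ε := by
      intro ω
      have hMε : 0 ≤ M - ε := by linarith
      calc (M - ε) * g ω ≤ (M - ε) * 1 := mul_le_mul_of_nonneg_left (hg01 ω).2 hMε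
        _ = M - ε := mul_one _
    apply le_antisymm
    · exact ciSup_le hle
    · have heq : (M - ε) * g ω₀ = M - ε := by
        have : g ω₀ = 1 := hg1 rfl
        rw [this, mul_one]
      calc M - ε = (M - ε) * g ω₀ := heq.symm
        _ ≤ ⨆ ω, (M - ε) * g ω :=
          le_ciSup ⟨M - ε, fun x ⟨ω, hω⟩ => hω ▸ hle ω⟩ ω₀
end

section
/- Let Ω be a nonempty compact Hausdorff space and let h : Ω → ℝ be a bounded upper semicontinuous function with h ≥ 0. Then the following are equivalent: (i) sup_{ω ∈ Ω} h(ω) = ‖h‖ₑ; (ii) for every ε > 0 there exists a continuous function f : Ω → ℝ with 0 ≤ f ≤ h pointwise and sup_{ω ∈ Ω} h(ω) ≤ sup_{ω ∈ Ω} f(ω) + ε. -/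
/-- Proposition 3.3 ((i)⇔(ii)): for a bounded nonnegative upper semicontinuous function `h`
on a nonempty compact Hausdorff space, `sup h = ‖h‖ₑ` iff for every `ε > 0` there is a
continuous `f` with `0 ≤ f ≤ h` pointwise and `sup h ≤ sup f + ε`. -/
theorem stmt_4 {Ω : Type*} [TopologicalSpace Ω] [CompactSpace Ω] [T2Space Ω] [Nonempty Ω]
    (h : Ω → ℝ) (hbd : ∃ C, ∀ ω, h ω ≤ C) (husc : UpperSemicontinuous h)
    (hpos : ∀ ω, 0 ≤ h ω) :
    (⨆ ω, h ω) = essNorm h ↔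
      ∀ ε > (0 : ℝ), ∃ f : Ω → ℝ, Continuous f ∧ (∀ ω, 0 ≤ f ω ∧ f ω ≤ h ω) ∧
        (⨆ ω, h ω) ≤ (⨆ ω, f ω) + ε := by
  set S := {c : ℝ | ∃ Δ : Set Ω, IsOpen Δ ∧ Dense Δ ∧ ∀ ω ∈ Δ, h ω ≤ c} with hSdef
  have hbdd : BddAbove (Set.range h) := by
    obtain ⟨C, hC⟩ := hbd
    exact ⟨C, by rintro x ⟨ω, rfl⟩; exact hC ω⟩
  set M := ⨆ ω, h ω with hM
  have hle : ∀ ω, h ω ≤ M := fun ω => le_ciSup hbdd ω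
  have hbdb : BddBelow S := by
    refine ⟨0, ?_⟩
    rintro c ⟨Δ, hΔo, hΔd, hΔ⟩
    obtain ⟨ω, hω⟩ := hΔd.nonempty
    exact le_trans (hpos ω) (hΔ ω hω)
  have hmem : M ∈ S := ⟨Set.univ, isOpen_univ, dense_univ, fun ω _ => hle ω⟩
  constructor
  · intro heq ε hε
    by_cases hMε : M - ε ≤ 0
    · refine ⟨fun _ => 0, continuous_const, fun ω => ⟨le_refl 0, hpos ω⟩, ?_⟩
      have : (⨆ _ : Ω, (0:ℝ)) = 0 := ciSup_const
      rw [this]; linarith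
    · push_neg at hMε
      have hAo : IsOpen {ω | h ω < M - ε} :=
        (upperSemicontinuous_iff_isOpen_preimage.mp husc) (M - ε)
      have hnd : ¬ Dense {ω | h ω < M - ε} := by
        intro hd
        have h1 : essNorm h ≤ M - ε :=
          csInf_le hbdb ⟨_, hAo, hd, fun ω hω => le_of_lt hω⟩
        rw [← heq] at h1; linarith
      rw [dense_iff_closure_eq, ← Set.compl_empty_iff] at hnd
      obtain ⟨ω₀, hω₀⟩ := Set.nonempty_iff_ne_empty.mpr hnd
      set U := (closure {ω | h ω < M - ε})ᶜ with hU
      have hUo : IsOpen U := isClosed_closure.isOpen_compl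
      have hUh : ∀ ω ∈ U, M - ε ≤ h ω := by
        intro ω hω
        by_contra hc
        exact hω (subset_closure (by simpa using lt_of_not_ge hc))
      -- Urysohn
      obtain ⟨g, hg0, hg1, hg01⟩ :=
        exists_continuous_zero_one_of_isClosed hUo.isClosed_compl isClosed_singleton
          (Set.disjoint_singleton_right.mpr (by simpa using hω₀))
      refine ⟨fun ω => (M - ε) * g ω, by continuity, ?_, ?_⟩
      · intro ω
        constructor
        · exact mul_nonneg (le_of_lt hMε) (hg01 ω).1
        · show (M - ε) * g ω ≤ h ω
          by_cases hωU : ω ∈ U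
          · have h1 := (hg01 ω).2
            have h2 : (M - ε) * g ω ≤ M - ε := by nlinarith
            exact h2.trans (hUh ω hωU)
          · have : g ω = 0 := hg0 hωU
            rw [this, mul_zero]; exact hpos ω
      · have hgω₀ : g ω₀ = 1 := hg1 rfl
        have hfb : BddAbove (Set.range fun ω => (M - ε) * g ω) := by
          refine ⟨M - ε, ?_⟩
          rintro x ⟨ω, rfl⟩
          show (M - ε) * g ω ≤ M - ε
          nlinarith [(hg01 ω).1, (hg01 ω).2]
        have : (M - ε) * g ω₀ ≤ ⨆ ω, (M - ε) * g ω := le_ciSup hfb ω₀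
        rw [hgω₀, mul_one] at this
        linarith
  · intro H
    refine le_antisymm ?_ (csInf_le hbdb hmem)
    refine le_csInf ⟨M, hmem⟩ ?_
    rintro c ⟨Δ, hΔo, hΔd, hΔ⟩
    refine le_of_forall_pos_le_add ?_
    intro ε hε
    obtain ⟨f, hfc, hfh, hfsup⟩ := H ε hε
    have hfc' : ∀ ω, f ω ≤ c := by
      intro ω
      have hclosed : IsClosed {ω | f ω ≤ c} := isClosed_le hfc continuous_const
      have hsub : Δ ⊆ {ω | f ω ≤ c} := fun ω hω => le_trans (hfh ω).2 (hΔ ω hω)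
      have : ω ∈ closure {ω | f ω ≤ c} :=
        closure_mono hsub (hΔd ω)
      rwa [hclosed.closure_eq] at this
    have : (⨆ ω, f ω) ≤ c := ciSup_le hfc'
    linarith
end

section
/- Let Ω be a topological space, let n be a positive integer, let f₁, …, fₙ : Ω → ℝ be continuous functions with fᵢ ≥ 0, and let h₁, …, hₙ : Ω → ℝ be bounded functions with hᵢ ≥ 0. Then ‖ Σᵢ fᵢ·hᵢ ‖ₑ ≤ ( sup_{ω ∈ Ω} Σᵢ fᵢ(ω) ) · maxᵢ ‖hᵢ‖ₑ, where (fᵢ·hᵢ)(ω) = fᵢ(ω)hᵢ(ω). -/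
open scoped BigOperators

/-!
On an open dense set common to all `hᵢ`, each `hᵢ` is below any `c > maxᵢ ‖hᵢ‖ₑ`, so there
`Σᵢ fᵢ hᵢ ≤ (Σᵢ fᵢ) c ≤ (sup Σᵢ fᵢ) c`. Finitely many open dense sets have an open dense
intersection, hence `‖Σᵢ fᵢ hᵢ‖ₑ ≤ (sup Σᵢ fᵢ) c` for every such `c`; let `c` decrease to the maximum.
-/

theorem dense_biInter_finset_of_isOpen {Ω ι : Type*} [TopologicalSpace Ω] (s : Finset ι)
    {Δ : ι → Set Ω} (ho : ∀ i, IsOpen (Δ i)) (hd : ∀ i, Dense (Δ i)) :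
    Dense (⋂ i ∈ s, Δ i) := by
  classical
  induction s using Finset.induction_on with
  | empty => simp [dense_univ]
  | insert a t _ ih =>
    rw [Finset.set_biInter_insert]
    exact (hd a).inter_of_isOpen_left ih (ho a)

section EssBound

variable {Ω : Type*} [TopologicalSpace Ω]

/-- `essNorm h` is, by definition, the infimum of the `c` with `IsEssBound h c`. -/
def IsEssBound (h : Ω → ℝ) (c : ℝ) : Prop :=
  ∃ Δ : Set Ω, IsOpen Δ ∧ Dense Δ ∧ ∀ ω ∈ Δ, h ω ≤ c

theorem IsEssBound.mono {h : Ω → ℝ} {c d : ℝ} (hc : IsEssBound h c) (hcd : c ≤ d) :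
    IsEssBound h d := by
  obtain ⟨Δ, hΔo, hΔd, hΔ⟩ := hc
  exact ⟨Δ, hΔo, hΔd, fun ω hω => (hΔ ω hω).trans hcd⟩

theorem isEssBound_of_forall_le {h : Ω → ℝ} {c : ℝ} (hc : ∀ ω, h ω ≤ c) : IsEssBound h c :=
  ⟨Set.univ, isOpen_univ, dense_univ, fun ω _ => hc ω⟩

theorem isEssBound_of_essNorm_lt {h : Ω → ℝ} (hb : ∃ C, ∀ ω, h ω ≤ C) {c : ℝ}
    (hc : essNorm h < c) : IsEssBound h c := by
  obtain ⟨C, hC⟩ := hb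
  obtain ⟨d, hd, hdc⟩ := exists_lt_of_csInf_lt ⟨C, isEssBound_of_forall_le hC⟩ hc
  exact IsEssBound.mono hd hdc.le

theorem IsEssBound.nonneg [Nonempty Ω] {h : Ω → ℝ} (h0 : ∀ ω, 0 ≤ h ω) {c : ℝ}
    (hc : IsEssBound h c) : 0 ≤ c := by
  obtain ⟨Δ, -, hΔd, hΔ⟩ := hc
  obtain ⟨ω, hω⟩ := hΔd.nonempty
  exact (h0 ω).trans (hΔ ω hω)

theorem essNorm_le [Nonempty Ω] {h : Ω → ℝ} (h0 : ∀ ω, 0 ≤ h ω) {c : ℝ}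
    (hc : IsEssBound h c) : essNorm h ≤ c :=
  csInf_le ⟨0, fun _ hd => IsEssBound.nonneg h0 hd⟩ hc

theorem essNorm_nonneg [Nonempty Ω] {h : Ω → ℝ} (h0 : ∀ ω, 0 ≤ h ω) : 0 ≤ essNorm h :=
  Real.sInf_nonneg fun _ hd => IsEssBound.nonneg h0 hd

theorem essNorm_of_isEmpty [IsEmpty Ω] (h : Ω → ℝ) : essNorm h = 0 := by
  have hall : {c : ℝ | IsEssBound h c} = Set.univ :=
    Set.eq_univ_of_forall fun _ => isEssBound_of_forall_le isEmptyElim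
  exact (congrArg sInf hall).trans (Real.sInf_of_not_bddBelow not_bddBelow_univ)

theorem isEssBound_sum_mul {ι : Type*} [Fintype ι] {f h : ι → Ω → ℝ}
    (hf0 : ∀ i ω, 0 ≤ f i ω) {F : ℝ} (hF : ∀ ω, ∑ i, f i ω ≤ F) {c : ℝ} (hc0 : 0 ≤ c)
    (hc : ∀ i, IsEssBound (h i) c) : IsEssBound (fun ω => ∑ i, f i ω * h i ω) (F * c) := by
  choose Δ hΔo hΔd hΔ using hc
  refine ⟨⋂ i ∈ Finset.univ, Δ i, isOpen_biInter_finset fun i _ => hΔo i,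
    dense_biInter_finset_of_isOpen _ hΔo hΔd, fun ω hω => ?_⟩
  simp only [Set.mem_iInter, Finset.mem_univ, forall_const] at hω
  calc ∑ i, f i ω * h i ω ≤ ∑ i, f i ω * c :=
        Finset.sum_le_sum fun i _ => mul_le_mul_of_nonneg_left (hΔ i ω (hω i)) (hf0 i ω)
    _ = (∑ i, f i ω) * c := (Finset.sum_mul ..).symm
    _ ≤ F * c := mul_le_mul_of_nonneg_right (hF ω) hc0

end EssBound

theorem stmt_5_general {Ω : Type*} [TopologicalSpace Ω] (n : ℕ)
    (f h : Fin n → Ω → ℝ)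
    (hf0 : ∀ i ω, 0 ≤ f i ω)
    (hhb : ∀ i, ∃ C, ∀ ω, h i ω ≤ C) (hh0 : ∀ i ω, 0 ≤ h i ω)
    (hfb : BddAbove (Set.range fun ω => ∑ i, f i ω)) :
    essNorm (fun ω => ∑ i, f i ω * h i ω) ≤
      (⨆ ω, ∑ i, f i ω) * ⨆ i, essNorm (h i) := by
  rcases isEmpty_or_nonempty Ω with hΩ | hΩ
  · rw [essNorm_of_isEmpty, Real.iSup_of_isEmpty, zero_mul]
  set F := ⨆ ω, ∑ i, f i ω
  set M := ⨆ i, essNorm (h i)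
  have hM0 : 0 ≤ M := Real.iSup_nonneg fun i => essNorm_nonneg (hh0 i)
  have hMle : ∀ i, essNorm (h i) ≤ M := le_ciSup (Set.finite_range _).bddAbove
  have hbound : ∀ c > M, essNorm (fun ω => ∑ i, f i ω * h i ω) ≤ F * c := fun c hc =>
    essNorm_le (fun ω => Finset.sum_nonneg fun i _ => mul_nonneg (hf0 i ω) (hh0 i ω))
      (isEssBound_sum_mul hf0 (le_ciSup hfb) (hM0.trans hc.le)
        fun i => isEssBound_of_essNorm_lt (hhb i) ((hMle i).trans_lt hc))
  exact ge_of_tendsto (((continuous_const_mul F).tendsto M).mono_left nhdsWithin_le_nhds)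
    (eventually_nhdsWithin_of_forall (s := Set.Ioi M) hbound)

/-- Lemma 3.4 (absolute C(Ω)-convexity estimate): for continuous nonnegative `f₁, …, fₙ`
and bounded nonnegative `h₁, …, hₙ`,
`‖ Σᵢ fᵢ·hᵢ ‖ₑ ≤ (sup_ω Σᵢ fᵢ(ω)) · maxᵢ ‖hᵢ‖ₑ`. -/
theorem stmt_5 {Ω : Type*} [TopologicalSpace Ω] (n : ℕ) (hn : 0 < n)
    (f h : Fin n → Ω → ℝ)
    (hf : ∀ i, Continuous (f i)) (hf0 : ∀ i ω, 0 ≤ f i ω)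
    (hhb : ∀ i, ∃ C, ∀ ω, h i ω ≤ C) (hh0 : ∀ i ω, 0 ≤ h i ω)
    (hfb : BddAbove (Set.range fun ω => ∑ i, f i ω)) :
    essNorm (fun ω => ∑ i, f i ω * h i ω) ≤
      (⨆ ω, ∑ i, f i ω) * ⨆ i, essNorm (h i) :=
  stmt_5_general n f h hf0 hhb hh0 hfb
end

section
/- Let Ω be a compact Hausdorff space and let X be a complex Banach space that is a module over C(Ω, ℂ) with ‖f·x‖ ≤ ‖f‖_∞‖x‖. Assume X is regular in the sense that for every x ∈ X and every ε > 0 there exists a bounded C(Ω, ℂ)-module map T : X → C(Ω, ℂ) with operator norm ‖T‖ ≤ 1 and ‖x‖ ≤ ‖T(x)‖_∞ + ε. Then the norm of X is absolutely C(Ω, ℂ)-convex: for all n, all f₁, …, fₙ, g₁, …, gₙ ∈ C(Ω, ℂ) and all x₁, …, xₙ ∈ X, ‖ Σᵢ (fᵢ gᵢ)·xᵢ ‖ ≤ ‖ Σᵢ |fᵢ|² ‖_∞^{1/2} · ( maxᵢ ‖xᵢ‖ ) · ‖ Σᵢ |gᵢ|² ‖_∞^{1/2}. -/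
/-!
Apply a contractive module map `T` that almost attains the norm of `∑ (fᵢgᵢ)•xᵢ`: the image is
`∑ fᵢ gᵢ T(xᵢ)` with `‖T(xᵢ)‖ ≤ ‖xᵢ‖`, so it suffices that the norm of `C(Ω, ℂ)` itself is
absolutely convex. That holds pointwise by the Cauchy–Schwarz inequality in `ℂⁿ`.
-/

open scoped BigOperators

theorem Complex.norm_sum_mul_mul_le {ι : Type*} (s : Finset ι) (a b c : ι → ℂ) {M : ℝ}
    (hM : 0 ≤ M) (hc : ∀ i ∈ s, ‖c i‖ ≤ M) :
    ‖∑ i ∈ s, a i * b i * c i‖ ≤ √(∑ i ∈ s, ‖a i‖ ^ 2) * M * √(∑ i ∈ s, ‖b i‖ ^ 2) :=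
  calc ‖∑ i ∈ s, a i * b i * c i‖
      ≤ ∑ i ∈ s, M * (‖a i‖ * ‖b i‖) := by
        refine (norm_sum_le _ _).trans (Finset.sum_le_sum fun i hi => ?_)
        rw [norm_mul, norm_mul, mul_comm M]
        exact mul_le_mul_of_nonneg_left (hc i hi) (by positivity)
    _ ≤ M * (√(∑ i ∈ s, ‖a i‖ ^ 2) * √(∑ i ∈ s, ‖b i‖ ^ 2)) := by
        rw [← Finset.mul_sum]
        exact mul_le_mul_of_nonneg_left (Real.sum_mul_le_sqrt_mul_sqrt _ _ _) hM
    _ = _ := by ring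

namespace ContinuousMap

variable {Ω : Type*} [TopologicalSpace Ω] [CompactSpace Ω] {ι : Type*} (s : Finset ι)

theorem sum_sq_norm_apply_le_norm_sum_mul_star (f : ι → C(Ω, ℂ)) (ω : Ω) :
    ∑ i ∈ s, ‖f i ω‖ ^ 2 ≤ ‖∑ i ∈ s, f i * star (f i)‖ := by
  have hval : (∑ i ∈ s, f i * star (f i)) ω = ((∑ i ∈ s, ‖f i ω‖ ^ 2 : ℝ) : ℂ) := by
    simp [Complex.mul_conj']
  have h := norm_coe_le_norm (∑ i ∈ s, f i * star (f i)) ω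
  rwa [hval, Complex.norm_real, Real.norm_of_nonneg (by positivity)] at h

theorem norm_sum_mul_mul_le (f g h : ι → C(Ω, ℂ)) {M : ℝ} (hM : 0 ≤ M)
    (hh : ∀ i ∈ s, ‖h i‖ ≤ M) :
    ‖∑ i ∈ s, f i * g i * h i‖ ≤
      √‖∑ i ∈ s, f i * star (f i)‖ * M * √‖∑ i ∈ s, star (g i) * g i‖ := by
  refine (norm_le _ (by positivity)).2 fun ω => ?_
  have hhω : ∀ i ∈ s, ‖h i ω‖ ≤ M := fun i hi => (norm_coe_le_norm _ ω).trans (hh i hi)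
  simp_rw [mul_comm (star (g _))]
  calc ‖(∑ i ∈ s, f i * g i * h i) ω‖
      ≤ √(∑ i ∈ s, ‖f i ω‖ ^ 2) * M * √(∑ i ∈ s, ‖g i ω‖ ^ 2) := by
        simpa using Complex.norm_sum_mul_mul_le s (f · ω) (g · ω) (h · ω) hM hhω
    _ ≤ _ := by gcongr <;> exact sum_sq_norm_apply_le_norm_sum_mul_star s _ ω

end ContinuousMap

theorem stmt_12_general {Ω : Type*} [TopologicalSpace Ω] [CompactSpace Ω]
    {X : Type*} [NormedAddCommGroup X] [NormedSpace ℂ X]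
    [Module C(Ω, ℂ) X]
    (hreg : ∀ x : X, ∀ ε > (0 : ℝ), ∃ T : X →L[ℂ] C(Ω, ℂ),
      (∀ (f : C(Ω, ℂ)) (y : X), T (f • y) = f * T y) ∧ ‖T‖ ≤ 1 ∧ ‖x‖ ≤ ‖T x‖ + ε) :
    ∀ (n : ℕ) (f g : Fin n → C(Ω, ℂ)) (x : Fin n → X),
      ‖∑ i, (f i * g i) • x i‖ ≤
        Real.sqrt ‖∑ i, f i * star (f i)‖ * (⨆ i, ‖x i‖) *
          Real.sqrt ‖∑ i, star (g i) * g i‖ := by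
  intro n f g x
  refine le_of_forall_pos_le_add fun ε hε => ?_
  obtain ⟨T, hT_mod, hT_le, hT_norm⟩ := hreg (∑ i, (f i * g i) • x i) ε hε
  have hTx : ∀ i ∈ Finset.univ, ‖T (x i)‖ ≤ ⨆ i, ‖x i‖ := fun i _ =>
    (T.le_of_opNorm_le hT_le _).trans <| (one_mul _).trans_le <| Finite.le_ciSup (‖x ·‖) i
  have hsup : 0 ≤ ⨆ i, ‖x i‖ := Real.iSup_nonneg fun i => norm_nonneg _
  calc ‖∑ i, (f i * g i) • x i‖
      ≤ ‖∑ i, f i * g i * T (x i)‖ + ε := by simpa [map_sum, hT_mod] using hT_norm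
    _ ≤ _ := by grw [ContinuousMap.norm_sum_mul_mul_le _ f g _ hsup hTx]

/-- Commutative case of Proposition 1.5: if `X` is a regular Banach `C(Ω, ℂ)`-module
(i.e. every element's norm is approximately attained by contractive module maps into
`C(Ω, ℂ)`), then the norm of `X` is absolutely `C(Ω, ℂ)`-convex:
`‖Σᵢ (fᵢgᵢ)·xᵢ‖ ≤ ‖Σᵢ fᵢfᵢ*‖^{1/2} · maxᵢ ‖xᵢ‖ · ‖Σᵢ gᵢ*gᵢ‖^{1/2}`. -/
theorem stmt_12 {Ω : Type*} [TopologicalSpace Ω] [CompactSpace Ω] [T2Space Ω]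
    {X : Type*} [NormedAddCommGroup X] [NormedSpace ℂ X] [CompleteSpace X]
    [Module C(Ω, ℂ) X]
    (hmod : ∀ (f : C(Ω, ℂ)) (x : X), ‖f • x‖ ≤ ‖f‖ * ‖x‖)
    (hreg : ∀ x : X, ∀ ε > (0 : ℝ), ∃ T : X →L[ℂ] C(Ω, ℂ),
      (∀ (f : C(Ω, ℂ)) (y : X), T (f • y) = f * T y) ∧ ‖T‖ ≤ 1 ∧ ‖x‖ ≤ ‖T x‖ + ε) :
    ∀ (n : ℕ) (f g : Fin n → C(Ω, ℂ)) (x : Fin n → X),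
      ‖∑ i, (f i * g i) • x i‖ ≤
        Real.sqrt ‖∑ i, f i * star (f i)‖ * (⨆ i, ‖x i‖) *
          Real.sqrt ‖∑ i, star (g i) * g i‖ :=
  stmt_12_general hreg
end
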